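/- Let M be a symmetric real n×n matrix all of whose entries lie in {0,1}, and let s be a natural number. Then the following are equivalent: (i) there exist positive integers c_1, …, c_s and a bijection e from the disjoint union ⨿_{i=1}^s {1,…,c_i} to {1,…,n} such that reindexing M along e yields the direct sum of the all-ones blocks J_{c_1}, …, J_{c_s}; (ii) every diagonal entry of M equals 1, the rank of M equals s, and M is positive semidefinite. -/

import Mathlib

/-!
Write `f v` for the block containing `v`. The matrix `blockOnes f` with entries
`[f u = f v]` factors as `Bᵀ B` through the block-by-vertex incidence matrix `B`, so it is
positive semidefinite, and its rank is the number of blocks: at most the height of `B`, and at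
least the rank of the identity submatrix on one representative per block.

Conversely, positive semidefiniteness makes "`M u v = 1`" transitive on a `0/1` matrix with unit
diagonal, so `M u v = 1` exactly when rows `u` and `v` coincide, and `M` is `blockOnes` of its
row map; the rank then counts the distinct rows, which are the `s` blocks.
-/

theorem Function.Surjective.exists_equiv_sigma_fin {m ι : Type*} [Fintype m] [DecidableEq ι]
    {f : m → ι} (hf : Function.Surjective f) :
    ∃ c : ι → ℕ, (∀ i, 0 < c i) ∧ ∃ e : (Σ i, Fin (c i)) ≃ m, ∀ x, f (e x) = x.1 := by
  refine ⟨fun i => Fintype.card {v // f v = i}, fun i => ?_,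
    (Equiv.sigmaCongrRight fun i => (Fintype.equivFin _).symm).trans (Equiv.sigmaFiberEquiv f),
    fun ⟨i, a⟩ => ((Fintype.equivFin _).symm a).2⟩
  obtain ⟨v, hv⟩ := hf i
  exact Fintype.card_pos_iff.mpr ⟨⟨v, hv⟩⟩

namespace Matrix

variable {m ι R : Type*}

section BlockOnes

variable [DecidableEq ι] (f : m → ι)

def blockOnes [Zero R] [One R] : Matrix m m R :=
  of fun u v => if f u = f v then 1 else 0

variable (R) in
def fiberIndicator [Zero R] [One R] : Matrix ι m R :=
  of fun i v => if f v = i then 1 else 0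

@[simp]
theorem blockOnes_apply [Zero R] [One R] (u v : m) :
    blockOnes f u v = (if f u = f v then 1 else 0 : R) :=
  rfl

@[simp]
theorem fiberIndicator_apply [Zero R] [One R] (i : ι) (v : m) :
    fiberIndicator R f i v = if f v = i then 1 else 0 :=
  rfl

theorem blockOnes_apply_self [Zero R] [One R] (v : m) : blockOnes f v v = (1 : R) :=
  if_pos rfl

theorem blockOnes_comp {κ : Type*} [DecidableEq κ] [Zero R] [One R] {φ : ι → κ}
    (hφ : Function.Injective φ) : blockOnes (φ ∘ f) = (blockOnes f : Matrix m m R) := by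
  ext u v
  simp only [blockOnes_apply, Function.comp_apply, hφ.eq_iff]

theorem transpose_fiberIndicator_mul_self [Fintype ι] [NonAssocSemiring R] :
    (fiberIndicator R f)ᵀ * fiberIndicator R f = blockOnes f := by
  ext u v
  simp [mul_apply, eq_comm]

theorem conjTranspose_fiberIndicator [NonAssocSemiring R] [StarRing R] :
    (fiberIndicator R f)ᴴ = (fiberIndicator R f)ᵀ := by
  ext v i
  simp only [fiberIndicator_apply, conjTranspose_apply, transpose_apply]
  split_ifs <;> simp

theorem posSemidef_blockOnes [Fintype m] [Fintype ι] [Ring R] [PartialOrder R] [StarRing R]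
    [StarOrderedRing R] : (blockOnes f : Matrix m m R).PosSemidef := by
  rw [← transpose_fiberIndicator_mul_self, ← conjTranspose_fiberIndicator]
  exact posSemidef_conjTranspose_mul_self _

variable {f}

theorem submatrix_blockOnes_surjInv [Zero R] [One R] (hf : Function.Surjective f) :
    (blockOnes f).submatrix (Function.surjInv hf) (Function.surjInv hf) = (1 : Matrix ι ι R) := by
  ext i j
  simp [one_apply, Function.surjInv_eq hf]

theorem rank_blockOnes [Fintype m] [Fintype ι] [CommSemiring R] [StrongRankCondition R]
    (hf : Function.Surjective f) : (blockOnes f : Matrix m m R).rank = Fintype.card ι := by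
  refine le_antisymm ?_ ?_
  · rw [← transpose_fiberIndicator_mul_self]
    exact (rank_mul_le_right _ _).trans (rank_le_card_height _)
  · simpa [submatrix_blockOnes_surjInv hf] using
      rank_submatrix_le (blockOnes f : Matrix m m R) (Function.surjInv hf) (Function.surjInv hf)

end BlockOnes

section ZeroOne

variable [Fintype m] [Ring R] [PartialOrder R] [IsOrderedRing R] [Nontrivial R] [StarRing R]
  [TrivialStar R] {M : Matrix m m R}

theorem PosSemidef.apply_eq_one_trans (hM : M.PosSemidef) (h01 : ∀ u v, M u v = 0 ∨ M u v = 1)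
    (hdiag : ∀ v, M v v = 1) {u v w : m} (huv : M u v = 1) (hvw : M v w = 1) : M u w = 1 := by
  classical
  refine (h01 u w).resolve_left fun huw => ?_
  have hsymm (a b : m) : M b a = M a b := by simpa using hM.isHermitian.apply a b
  -- the quadratic form at `e_u - e_v + e_w` is `3 - 2 M u v - 2 M v w + 2 M u w = -1`
  have := hM.dotProduct_mulVec_nonneg (Pi.single u 1 - Pi.single v 1 + Pi.single w 1)
  simp only [star_trivial, mulVec_add, mulVec_sub, mulVec_single, MulOpposite.op_one, one_smul,
    dotProduct_add, dotProduct_sub, add_dotProduct, sub_dotProduct, single_dotProduct, col_apply,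
    mul_one, hdiag, hsymm u v, hsymm u w, hsymm v w, huv, hvw, huw] at this
  norm_num at this

theorem PosSemidef.apply_eq_one_iff_row_eq (hM : M.PosSemidef)
    (h01 : ∀ u v, M u v = 0 ∨ M u v = 1) (hdiag : ∀ v, M v v = 1) {u v : m} :
    M u v = 1 ↔ M.row u = M.row v := by
  have hsymm : M v u = M u v := by simpa using hM.isHermitian.apply u v
  refine ⟨fun huv => funext fun w => ?_, fun h => (congrFun h v).trans (hdiag v)⟩
  rw [row_apply, row_apply]
  have key : M u w = 1 ↔ M v w = 1 :=
    ⟨hM.apply_eq_one_trans h01 hdiag (hsymm.trans huv), hM.apply_eq_one_trans h01 hdiag huv⟩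
  rcases h01 u w with huw | huw
  · rw [huw, (h01 v w).resolve_right fun hvw => zero_ne_one (huw ▸ key.mpr hvw)]
  · rw [huw, key.mp huw]

end ZeroOne

end Matrix

theorem zero_one_matrix_direct_sum_iff_general
    (n : ℕ) (M : Matrix (Fin n) (Fin n) ℝ)
    (h01 : ∀ u v : Fin n, M u v = 0 ∨ M u v = 1) (s : ℕ) :
    (∃ c : Fin s → ℕ, (∀ i, 0 < c i) ∧
      ∃ e : (Σ i : Fin s, Fin (c i)) ≃ Fin n,
        ∀ x y : (Σ i : Fin s, Fin (c i)),
          M (e x) (e y) = if x.1 = y.1 then 1 else 0) ↔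
    ((∀ v : Fin n, M v v = 1) ∧ M.rank = s ∧ M.PosSemidef) := by
  constructor
  · rintro ⟨c, hc, e, he⟩
    have hf : Function.Surjective fun v => (e.symm v).1 := fun i => ⟨e ⟨i, 0, hc i⟩, by simp⟩
    obtain rfl : M = Matrix.blockOnes fun v => (e.symm v).1 := by
      ext u v
      simpa using he (e.symm u) (e.symm v)
    exact ⟨Matrix.blockOnes_apply_self _, by rw [Matrix.rank_blockOnes hf, Fintype.card_fin],
      Matrix.posSemidef_blockOnes _⟩
  · rintro ⟨hdiag, hrank, hpsd⟩
    set f := Set.rangeFactorization M.row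
    have hf : Function.Surjective f := Set.rangeFactorization_surjective
    have hM : M = Matrix.blockOnes f := by
      ext u v
      have hfuv : f u = f v ↔ M u v = 1 :=
        Subtype.ext_iff.trans (hpsd.apply_eq_one_iff_row_eq h01 hdiag).symm
      simp only [Matrix.blockOnes_apply, hfuv]
      split_ifs with h
      · exact h
      · exact (h01 u v).resolve_right h
    let eqv : Set.range M.row ≃ Fin s :=
      Fintype.equivFinOfCardEq (by rw [← Matrix.rank_blockOnes (R := ℝ) hf, ← hM, hrank])
    obtain ⟨c, hc, e, he⟩ := (eqv.surjective.comp hf).exists_equiv_sigma_fin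
    refine ⟨c, hc, e, fun x y => ?_⟩
    rw [hM, ← Matrix.blockOnes_comp f eqv.injective, Matrix.blockOnes_apply, he, he]

/-- For a symmetric real `n × n` matrix `M` with entries in `{0,1}` and a
natural number `s`, the following are equivalent:
(i) there are positive integers `c 1, …, c s` and a bijection `e` from the disjoint union
`⨿ i, Fin (c i)` to `Fin n` along which `M` is the direct sum of the all-ones blocks
`J_{c 1}, …, J_{c s}`;
(ii) every diagonal entry of `M` is `1`, `rank M = s`, and `M` is positive semidefinite. -/
theorem zero_one_matrix_direct_sum_iff
    (n : ℕ) (M : Matrix (Fin n) (Fin n) ℝ) (hsymm : M.IsSymm)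
    (h01 : ∀ u v : Fin n, M u v = 0 ∨ M u v = 1) (s : ℕ) :
    (∃ c : Fin s → ℕ, (∀ i, 0 < c i) ∧
      ∃ e : (Σ i : Fin s, Fin (c i)) ≃ Fin n,
        ∀ x y : (Σ i : Fin s, Fin (c i)),
          M (e x) (e y) = if x.1 = y.1 then 1 else 0) ↔
    ((∀ v : Fin n, M v v = 1) ∧ M.rank = s ∧ M.PosSemidef) :=
  zero_one_matrix_direct_sum_iff_general n M h01 s
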